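/- arXiv:2405.18437 — 2 statements merged into one kernel-verified Lean document; each statement's English description precedes it below -/
import Mathlib

section
/- Let ψ: [0,∞) → ℝ be twice continuously differentiable with ψ'' decreasing on [0,∞). For z ∈ [0,∞) define c_ψ(z) = ψ''(0) if z = 0, and c_ψ(z) = 2(ψ(0) − ψ(z) + ψ'(z)·z)/z² otherwise. Then for every x ∈ [0,∞), ψ(x) ≤ ψ(z) + ψ'(z)(x − z) + (1/2)·c_ψ(z)·(x − z)². -/
/-!
Let `g y = ψ z + ψ' z (y - z) + ½ c (y - z)² - ψ y` be the gap between the quadratic and `ψ`.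
The choice of `c` makes `g 0 = g z = g' z = 0`, and `g'' = c - ψ''` is nondecreasing.
For `z > 0`, Rolle's theorem applied twice gives `ξ < η` in `(0, z)` with `g' ξ = 0` and
`g'' η = 0`. Since `g''` changes sign only at `η`, `g'` is `≥ 0` on `[0, ξ]`, `≤ 0` on `[ξ, z]`
and `≥ 0` on `[z, ∞)`, so `g` rises from `g 0 = 0`, falls to `g z = 0` and rises again.
For `z = 0` the same picture holds with `ξ = η = 0`, because `c = ψ'' 0` makes `g'' 0 = 0`.
-/

open Set

section DerivWithin

variable {f f' : ℝ → ℝ} {s t : Set ℝ}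

theorem monotoneOn_of_hasDerivWithinAt_nonneg_of_subset
    (hf : ∀ x ∈ s, HasDerivWithinAt f (f' x) s x) (ht : Convex ℝ t) (hts : t ⊆ s)
    (hf' : ∀ x ∈ t, 0 ≤ f' x) : MonotoneOn f t :=
  monotoneOn_of_hasDerivWithinAt_nonneg ht
    (fun x hx => ((hf x (hts hx)).continuousWithinAt).mono hts)
    (fun x hx => (hf x (hts (interior_subset hx))).mono (interior_subset.trans hts))
    (fun x hx => hf' x (interior_subset hx))

theorem antitoneOn_of_hasDerivWithinAt_nonpos_of_subset
    (hf : ∀ x ∈ s, HasDerivWithinAt f (f' x) s x) (ht : Convex ℝ t) (hts : t ⊆ s)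
    (hf' : ∀ x ∈ t, f' x ≤ 0) : AntitoneOn f t :=
  antitoneOn_of_hasDerivWithinAt_nonpos ht
    (fun x hx => ((hf x (hts hx)).continuousWithinAt).mono hts)
    (fun x hx => (hf x (hts (interior_subset hx))).mono (interior_subset.trans hts))
    (fun x hx => hf' x (interior_subset hx))

theorem exists_mem_Ioo_hasDerivWithinAt_Ici_eq_zero {a b c : ℝ}
    (hf : ∀ x ∈ Ici a, HasDerivWithinAt f (f' x) (Ici a) x) (hab : a ≤ b) (hbc : b < c)
    (hfbc : f b = f c) : ∃ ξ ∈ Ioo b c, f' ξ = 0 :=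
  exists_hasDerivAt_eq_zero hbc
    (fun x hx => ((hf x (hab.trans hx.1)).continuousWithinAt).mono
      (Icc_subset_Ici_self.trans (Ici_subset_Ici.2 hab)))
    hfbc
    (fun x hx => (hf x (hab.trans hx.1.le)).hasDerivAt (Ici_mem_nhds (hab.trans_lt hx.1)))

end DerivWithin

theorem nonneg_of_monotoneOn_antitoneOn_monotoneOn {g : ℝ → ℝ} {a ξ z : ℝ}
    (hξ : ξ ∈ Icc a z) (hga : g a = 0) (hgz : g z = 0) (hrise : MonotoneOn g (Icc a ξ))
    (hfall : AntitoneOn g (Icc ξ z)) (hrise' : MonotoneOn g (Ici z)) :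
    ∀ x ∈ Ici a, 0 ≤ g x := by
  intro x hx
  rcases le_total x ξ with hxξ | hξx
  · exact hga ▸ hrise (left_mem_Icc.2 hξ.1) ⟨hx, hxξ⟩ hx
  rcases le_total x z with hxz | hzx
  · exact hgz ▸ hfall ⟨hξx, hxz⟩ (right_mem_Icc.2 hξ.2) hxz
  · exact hgz ▸ hrise' self_mem_Ici hzx hzx

theorem nonneg_of_hasDerivWithinAt_of_monotoneOn_deriv2 {g g' g'' : ℝ → ℝ} {a ξ η z : ℝ}
    (hg : ∀ x ∈ Ici a, HasDerivWithinAt g (g' x) (Ici a) x)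
    (hg' : ∀ x ∈ Ici a, HasDerivWithinAt g' (g'' x) (Ici a) x)
    (hg'' : MonotoneOn g'' (Ici a)) (hξ : ξ ∈ Icc a η) (hηz : η ≤ z)
    (hga : g a = 0) (hgz : g z = 0) (hg'ξ : g' ξ = 0) (hg'z : g' z = 0) (hg''η : g'' η = 0) :
    ∀ x ∈ Ici a, 0 ≤ g x := by
  have haη : a ≤ η := hξ.1.trans hξ.2
  have hξz : ξ ≤ z := hξ.2.trans hηz
  have hg'_anti : AntitoneOn g' (Icc a η) :=
    antitoneOn_of_hasDerivWithinAt_nonpos_of_subset hg' (convex_Icc a η) Icc_subset_Ici_self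
      fun x hx => hg''η ▸ hg'' hx.1 haη hx.2
  have hg'_mono : MonotoneOn g' (Ici η) :=
    monotoneOn_of_hasDerivWithinAt_nonneg_of_subset hg' (convex_Ici η) (Ici_subset_Ici.2 haη)
      fun x hx => hg''η ▸ hg'' haη (haη.trans hx) hx
  refine nonneg_of_monotoneOn_antitoneOn_monotoneOn ⟨hξ.1, hξz⟩ hga hgz ?_ ?_ ?_
  · refine monotoneOn_of_hasDerivWithinAt_nonneg_of_subset hg (convex_Icc a ξ)
      Icc_subset_Ici_self fun x hx => ?_
    exact hg'ξ ▸ hg'_anti ⟨hx.1, hx.2.trans hξ.2⟩ hξ hx.2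
  · refine antitoneOn_of_hasDerivWithinAt_nonpos_of_subset hg (convex_Icc ξ z)
      (Icc_subset_Ici_self.trans (Ici_subset_Ici.2 hξ.1)) fun x hx => ?_
    rcases le_total x η with hxη | hηx
    · exact hg'ξ ▸ hg'_anti hξ ⟨hξ.1.trans hx.1, hxη⟩ hx.1
    · exact hg'z ▸ hg'_mono hηx hηz hx.2
  · exact monotoneOn_of_hasDerivWithinAt_nonneg_of_subset hg (convex_Ici z)
      (Ici_subset_Ici.2 (hξ.1.trans hξz)) fun x hx => hg'z ▸ hg'_mono hηz (hηz.trans hx) hx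

theorem hasDerivAt_quadratic (A B C z y : ℝ) :
    HasDerivAt (fun y => A + B * (y - z) + 1/2 * C * (y - z) ^ 2) (B + C * (y - z)) y := by
  have hlin : HasDerivAt (fun y : ℝ => y - z) 1 y := (hasDerivAt_id y).sub_const z
  refine (((hlin.const_mul B).const_add A).fun_add
    ((hlin.fun_pow 2).const_mul (1/2 * C))).congr_deriv ?_
  ring

theorem hasDerivAt_affine (B C z y : ℝ) : HasDerivAt (fun y => B + C * (y - z)) C y := by
  simpa using (((hasDerivAt_id y).sub_const z).const_mul C).const_add B

theorem stmt_0_general (ψ ψ' ψ'' : ℝ → ℝ)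
    (hd1 : ∀ x ∈ Ici (0:ℝ), HasDerivWithinAt ψ (ψ' x) (Ici 0) x)
    (hd2 : ∀ x ∈ Ici (0:ℝ), HasDerivWithinAt ψ' (ψ'' x) (Ici 0) x)
    (hdec : AntitoneOn ψ'' (Ici 0))
    (z : ℝ) (hz : z ∈ Ici (0:ℝ)) :
    ∀ x ∈ Ici (0:ℝ),
      ψ x ≤ ψ z + ψ' z * (x - z) +
        (1/2) * (if z = 0 then ψ'' 0 else 2 * (ψ 0 - ψ z + ψ' z * z) / z ^ 2) * (x - z) ^ 2 := by
  intro x hx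
  set c := if z = 0 then ψ'' 0 else 2 * (ψ 0 - ψ z + ψ' z * z) / z ^ 2 with hc
  set g := fun y => ψ z + ψ' z * (y - z) + 1/2 * c * (y - z) ^ 2 - ψ y with hg
  suffices 0 ≤ g x by simp only [hg] at this; linarith
  have hg' : ∀ y ∈ Ici (0:ℝ), HasDerivWithinAt g (ψ' z + c * (y - z) - ψ' y) (Ici 0) y :=
    fun y hy => (hasDerivAt_quadratic _ _ c z y).hasDerivWithinAt.sub (hd1 y hy)
  have hg'' : ∀ y ∈ Ici (0:ℝ),
      HasDerivWithinAt (fun y => ψ' z + c * (y - z) - ψ' y) (c - ψ'' y) (Ici 0) y :=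
    fun y hy => (hasDerivAt_affine _ c z y).hasDerivWithinAt.sub (hd2 y hy)
  have hg''_mono : MonotoneOn (fun y => c - ψ'' y) (Ici 0) :=
    fun a ha b hb hab => sub_le_sub_left (hdec ha hb hab) c
  have hgz : g z = 0 := by simp [hg]
  have hg'z : ψ' z + c * (z - z) - ψ' z = 0 := by ring
  rcases (mem_Ici.1 hz).eq_or_lt with rfl | hzpos
  · exact nonneg_of_hasDerivWithinAt_of_monotoneOn_deriv2 hg' hg'' hg''_mono
      (left_mem_Icc.2 le_rfl) le_rfl hgz hgz hg'z hg'z (by simp [hc]) x hx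
  have hg0 : g 0 = 0 := by
    simp only [hg, hc, if_neg hzpos.ne']
    field_simp
    ring
  obtain ⟨ξ, hξ, hg'ξ⟩ :=
    exists_mem_Ioo_hasDerivWithinAt_Ici_eq_zero hg' le_rfl hzpos (hg0.trans hgz.symm)
  obtain ⟨η, hη, hg''η⟩ :=
    exists_mem_Ioo_hasDerivWithinAt_Ici_eq_zero hg'' hξ.1.le hξ.2 (hg'ξ.trans hg'z.symm)
  exact nonneg_of_hasDerivWithinAt_of_monotoneOn_deriv2 hg' hg'' hg''_mono
    ⟨hξ.1.le, hη.1.le⟩ hη.2.le hg0 hgz hg'ξ hg'z hg''η x hx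

theorem stmt_0 (ψ ψ' ψ'' : ℝ → ℝ)
    (hd1 : ∀ x ∈ Ici (0:ℝ), HasDerivWithinAt ψ (ψ' x) (Ici 0) x)
    (hd2 : ∀ x ∈ Ici (0:ℝ), HasDerivWithinAt ψ' (ψ'' x) (Ici 0) x)
    (hcont : ContinuousOn ψ'' (Ici 0))
    (hdec : AntitoneOn ψ'' (Ici 0))
    (z : ℝ) (hz : z ∈ Ici (0:ℝ)) :
    ∀ x ∈ Ici (0:ℝ),
      ψ x ≤ ψ z + ψ' z * (x - z) +
        (1/2) * (if z = 0 then ψ'' 0 else 2 * (ψ 0 - ψ z + ψ' z * z) / z ^ 2) * (x - z) ^ 2 :=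
  stmt_0_general ψ ψ' ψ'' hd1 hd2 hdec z hz
end

section
/- Fix K ≥ 1, weights u_1,…,u_N ≥ 0 with ∑_n u_n > 0, and points z_1,…,z_N in the interior of the unit simplex of ℝ^K. Define F(α) = ∑_{n=1}^N u_n ( ∑_{i=1}^K −(α_i − 1) log z_{n,i} + ∑_{i=1}^K log Γ(α_i) − log Γ(∑_{i=1}^K α_i) ) for α ∈ (0,∞)^K. Let φ(t) = log Γ(t+1) and c(t) = φ''(0) if t = 0 and c(t) = 2(φ(0) − φ(t) + φ'(t)t)/t² otherwise. Then for every β ∈ (0,∞)^K, the function q(α; β) = ∑_n u_n [ ∑_i ( −(α_i − 1) log z_{n,i} − log α_i + φ(β_i) + φ'(β_i)(α_i − β_i) + (c(β_i)/2)(α_i − β_i)² ) − log Γ(∑_i β_i) − (∑_i (α_i − β_i))(log Γ)'(∑_i β_i) ] satisfies q(α; β) ≥ F(α) for all α ∈ (0,∞)^K and q(β; β) = F(β). -/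
open Finset

noncomputable def phi (t : ℝ) : ℝ := Real.log (Real.Gamma (t + 1))

noncomputable def curv (t : ℝ) : ℝ :=
  if t = 0 then iteratedDeriv 2 phi 0
  else 2 * (phi 0 - phi t + deriv phi t * t) / t ^ 2

/-!
Write `log Γ(α) = φ(α) - log α` with `φ(t) = log Γ(t + 1)`. The digamma function `ψ = (log Γ)'`
satisfies `ψ(x + 1) = ψ(x) + 1/x` and, by convexity of `log Γ`, `log x ≤ ψ(x + 1) ≤ log (x + 1)`;
together these make `ψ` the pointwise limit of the concave functions `log N - ∑_{m ≤ N} 1/(x + m)`,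
so `φ' = ψ(· + 1)` is concave. A function with concave derivative lies below the quadratic that
agrees with it at `0` and is tangent to it at `β`: the derivative of the gap is convex and vanishes
at `β` and (by Rolle) somewhere in `(0, β)`, which leaves no room for the gap to become negative.
Finally `-log Γ(∑ α_i)` is bounded by its tangent at `∑ β_i`, since `log Γ` is convex.
-/

open Real Set Filter Topology

theorem ConcaveOn.of_tendsto {ι E : Type*} [AddCommMonoid E] [Module ℝ E] {l : Filter ι} [l.NeBot]
    {s : Set E} {f : ι → E → ℝ} {g : E → ℝ} (hf : ∀ i, ConcaveOn ℝ s (f i))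
    (hs : Convex ℝ s) (hlim : ∀ x ∈ s, Tendsto (fun i => f i x) l (𝓝 (g x))) :
    ConcaveOn ℝ s g :=
  ⟨hs, fun x hx y hy a b ha hb hab =>
    le_of_tendsto_of_tendsto' (((hlim x hx).const_smul a).add ((hlim y hy).const_smul b))
      (hlim _ (hs hx hy ha hb hab)) fun i => (hf i).2 hx hy ha hb hab⟩

theorem ConvexOn.add_deriv_mul_sub_le {S : Set ℝ} {f : ℝ → ℝ} (hf : ConvexOn ℝ S f) {x y : ℝ}
    (hx : x ∈ S) (hy : y ∈ S) (hd : DifferentiableAt ℝ f x) :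
    f x + deriv f x * (y - x) ≤ f y := by
  rcases lt_trichotomy x y with hxy | rfl | hyx
  · have h := hf.deriv_le_slope hx hy hxy hd
    rw [slope_def_field, le_div_iff₀ (sub_pos.2 hxy)] at h
    linarith
  · simp
  · have h := hf.slope_le_deriv hy hx hyx hd
    rw [slope_def_field, div_le_iff₀ (sub_pos.2 hyx)] at h
    linarith

theorem le_quadratic_of_concaveOn_deriv {f f' : ℝ → ℝ} (hfc : ContinuousOn f (Ici 0))
    (hf : ∀ x, 0 < x → HasDerivAt f (f' x) x) (hf' : ConcaveOn ℝ (Ioi 0) f')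
    {β t : ℝ} (hβ : 0 < β) (ht : 0 ≤ t) :
    f t ≤ f β + f' β * (t - β) + 2 * (f 0 - f β + f' β * β) / β ^ 2 / 2 * (t - β) ^ 2 := by
  set c := 2 * (f 0 - f β + f' β * β) / β ^ 2
  set g := fun y => f β + f' β * (y - β) + c / 2 * (y - β) ^ 2 - f y
  set G := fun y => f' β + c * (y - β) - f' y
  have hg0 : g 0 = 0 := by
    simp only [g, c]
    field_simp
    ring
  clear_value c
  have hgβ : g β = 0 := by simp [g]
  have hGβ : G β = 0 := by simp [G]
  have hgc : ContinuousOn g (Ici 0) := by fun_prop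
  have hgd (y : ℝ) (hy : 0 < y) : HasDerivAt g (G y) y := by
    have hlin := (hasDerivAt_id' y).sub_const β
    have hquad : HasDerivAt (fun y => f β + f' β * (y - β) + c / 2 * (y - β) ^ 2)
        (f' β + c * (y - β)) y :=
      (((hlin.const_mul (f' β)).const_add (f β)).fun_add
        ((hlin.fun_pow 2).const_mul (c / 2))).congr_deriv (by ring)
    exact hquad.sub (hf y hy)
  have hG : ConvexOn ℝ (Ioi 0) G := by
    refine ConvexOn.sub ⟨convex_Ioi 0, fun x _ y _ a b _ _ hab => le_of_eq ?_⟩ hf'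
    simp only [smul_eq_mul]
    linear_combination (c * β - f' β) * hab
  by_contra! hlt
  have hgt : g t < 0 := by simp only [g]; linarith
  have hslope {a b : ℝ} (ha : 0 ≤ a) (hab : a < b) :
      ∃ y ∈ Ioo a b, G y = (g b - g a) / (b - a) :=
    exists_hasDerivAt_eq_slope g G hab (hgc.mono fun y hy => ha.trans hy.1)
      fun y hy => hgd y (ha.trans_lt hy.1)
  rcases lt_trichotomy t β with htβ | rfl | hβt
  · have ht0 : 0 < t := ht.lt_of_ne (by rintro rfl; linarith)
    obtain ⟨a, ha, hGa⟩ := hslope le_rfl ht0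
    obtain ⟨b, hb, hGb⟩ := hslope ht htβ
    have hGa_neg : G a < 0 := by
      rw [hGa, hg0]; exact div_neg_of_neg_of_pos (by linarith) (by linarith)
    have hGb_pos : 0 < G b := by rw [hGb, hgβ]; exact div_pos (by linarith) (by linarith)
    have := hG.lt_right_of_left_lt ha.1 hβ
      (by rw [openSegment_eq_Ioo (ha.2.trans hb.1 |>.trans hb.2)]; exact ⟨ha.2.trans hb.1, hb.2⟩)
      (hGa_neg.trans hGb_pos)
    linarith
  · linarith
  · obtain ⟨ξ, hξ, hGξ⟩ := exists_hasDerivAt_eq_zero hβ (hgc.mono Icc_subset_Ici_self)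
      (hg0.trans hgβ.symm) fun y hy => hgd y hy.1
    obtain ⟨b, hb, hGb⟩ := hslope hβ.le hβt
    have hGb_neg : G b < 0 := by
      rw [hGb, hgβ]; exact div_neg_of_neg_of_pos (by linarith) (by linarith)
    have := hG.lt_left_of_right_lt hξ.1 (hβ.trans hb.1)
      (by rw [openSegment_eq_Ioo (hξ.2.trans hb.1)]; exact ⟨hξ.2, hb.1⟩) (hGβ ▸ hGb_neg)
    linarith

theorem convexOn_inv_add {c : ℝ} (hc : 0 ≤ c) : ConvexOn ℝ (Ioi 0) fun x : ℝ => (x + c)⁻¹ := by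
  have hsub : Ioi (0 : ℝ) ⊆ (fun x => c + x) ⁻¹' Ioi 0 := fun x (hx : 0 < x) =>
    show 0 < c + x by linarith
  simpa [Function.comp_def, add_comm] using
    ((convexOn_zpow (𝕜 := ℝ) (-1)).translate_right c).subset hsub (convex_Ioi 0)

theorem concaveOn_log_sub_sum_inv (N : ℕ) :
    ConcaveOn ℝ (Ioi 0) fun x : ℝ => log N - ∑ m ∈ range (N + 1), (x + m)⁻¹ := by
  refine (concaveOn_const _ (convex_Ioi 0)).sub ?_
  induction N + 1 with
  | zero => simpa using convexOn_const 0 (convex_Ioi 0)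
  | succ n ih =>
    simp only [sum_range_succ]
    exact ih.add (convexOn_inv_add n.cast_nonneg)

local notation "ψ" => deriv fun t : ℝ => log (Gamma t)

theorem hasDerivAt_log_Gamma {x : ℝ} (hx : 0 < x) :
    HasDerivAt (fun t => log (Gamma t)) (ψ x) x :=
  ((differentiableAt_Gamma fun m => by linarith [(m.cast_nonneg : (0:ℝ) ≤ m)]).log
    (Gamma_pos_of_pos hx).ne').hasDerivAt

theorem digamma_add_one {x : ℝ} (hx : 0 < x) : ψ (x + 1) = ψ x + x⁻¹ := by
  have hrec : (fun t => log (Gamma (t + 1))) =ᶠ[𝓝 x] fun t => log (Gamma t) + log t := by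
    filter_upwards [eventually_gt_nhds hx] with t ht
    rw [Gamma_add_one ht.ne', log_mul ht.ne' (Gamma_pos_of_pos ht).ne', add_comm]
  exact (hasDerivAt_log_Gamma (by linarith)).comp_add_const x 1 |>.unique <|
    ((hasDerivAt_log_Gamma hx).add (hasDerivAt_log hx.ne')).congr_of_eventuallyEq hrec

theorem digamma_add_nat {x : ℝ} (hx : 0 < x) (n : ℕ) :
    ψ (x + n) = ψ x + ∑ m ∈ range n, (x + m)⁻¹ := by
  induction n with
  | zero => simp
  | succ n ih =>
    rw [Nat.cast_succ, ← add_assoc, digamma_add_one (by positivity), ih, sum_range_succ, add_assoc]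

theorem log_le_digamma_add_one {x : ℝ} (hx : 0 < x) : log x ≤ ψ (x + 1) := by
  have h := convexOn_log_Gamma.slope_le_deriv (mem_Ioi.2 hx) (mem_Ioi.2 (by linarith : 0 < x + 1))
    (lt_add_one x) (hasDerivAt_log_Gamma (by linarith)).differentiableAt
  rwa [slope_def_field, add_sub_cancel_left, div_one, Function.comp_apply, Function.comp_apply,
    Gamma_add_one hx.ne', log_mul hx.ne' (Gamma_pos_of_pos hx).ne', add_sub_cancel_right] at h

theorem digamma_add_one_le_log {x : ℝ} (hx : 0 < x) : ψ (x + 1) ≤ log (x + 1) := by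
  have hx1 : 0 < x + 1 := by linarith
  have h := convexOn_log_Gamma.deriv_le_slope (mem_Ioi.2 hx1)
    (mem_Ioi.2 (by linarith : 0 < x + 1 + 1)) (lt_add_one _)
    (hasDerivAt_log_Gamma hx1).differentiableAt
  rwa [slope_def_field, add_sub_cancel_left, div_one, Function.comp_apply, Function.comp_apply,
    Gamma_add_one hx1.ne', log_mul hx1.ne' (Gamma_pos_of_pos hx1).ne', add_sub_cancel_right] at h

theorem tendsto_log_sub_sum_inv {x : ℝ} (hx : 0 < x) :
    Tendsto (fun N : ℕ => log N - ∑ m ∈ range (N + 1), (x + m)⁻¹) atTop (𝓝 (ψ x)) := by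
  have hshift (N : ℕ) : log N - ∑ m ∈ range (N + 1), (x + m)⁻¹ = ψ x - (ψ (N + x + 1) - log N) := by
    have := digamma_add_nat hx (N + 1)
    push_cast at this
    rw [add_comm (N : ℝ) x, add_assoc, this]
    ring
  have hlim : Tendsto (fun N : ℕ => ψ (N + x + 1) - log N) atTop (𝓝 0) := by
    refine tendsto_of_tendsto_of_tendsto_of_le_of_le
      ((tendsto_log_comp_add_sub_log x).comp tendsto_natCast_atTop_atTop)
      ((tendsto_log_comp_add_sub_log (x + 1)).comp tendsto_natCast_atTop_atTop)
      (fun N => ?_) (fun N => ?_)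
    · simpa using log_le_digamma_add_one (by positivity : (0:ℝ) < N + x)
    · simpa [add_assoc] using digamma_add_one_le_log (by positivity : (0:ℝ) < N + x)
  simpa [hshift] using tendsto_const_nhds.sub hlim

theorem concaveOn_digamma : ConcaveOn ℝ (Ioi 0) ψ :=
  .of_tendsto concaveOn_log_sub_sum_inv (convex_Ioi 0) fun _ hx => tendsto_log_sub_sum_inv hx

theorem hasDerivAt_phi {x : ℝ} (hx : -1 < x) : HasDerivAt phi (ψ (x + 1)) x :=
  (hasDerivAt_log_Gamma (by linarith)).comp_add_const x 1

theorem concaveOn_deriv_phi : ConcaveOn ℝ (Ioi 0) (deriv phi) := by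
  have hsub : Ioi (0 : ℝ) ⊆ (fun x => 1 + x) ⁻¹' Ioi 0 := fun x (hx : 0 < x) =>
    show 0 < 1 + x by linarith
  refine ((concaveOn_digamma.translate_right 1).subset hsub (convex_Ioi 0)).congr fun x hx => ?_
  simp [(hasDerivAt_phi (by linarith [mem_Ioi.1 hx] : -1 < x)).deriv, add_comm]

theorem phi_le_quadratic {β t : ℝ} (hβ : 0 < β) (ht : 0 ≤ t) :
    phi t ≤ phi β + deriv phi β * (t - β) + curv β / 2 * (t - β) ^ 2 := by
  rw [curv, if_neg hβ.ne']
  exact le_quadratic_of_concaveOn_deriv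
    (fun x hx => (hasDerivAt_phi (by linarith [mem_Ici.1 hx])).continuousAt.continuousWithinAt)
    (fun x hx => (hasDerivAt_phi (by linarith)).differentiableAt.hasDerivAt)
    concaveOn_deriv_phi hβ ht

theorem log_Gamma_eq_phi_sub_log {x : ℝ} (hx : 0 < x) : log (Gamma x) = phi x - log x := by
  rw [phi, Gamma_add_one hx.ne', log_mul hx.ne' (Gamma_pos_of_pos hx).ne']
  ring

theorem stmt_4_general (K N : ℕ) (hK : 1 ≤ K)
    (u : Fin N → ℝ) (hu : ∀ n, 0 ≤ u n)
    (z : Fin N → Fin K → ℝ)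
    (F : (Fin K → ℝ) → ℝ) (q : (Fin K → ℝ) → (Fin K → ℝ) → ℝ)
    (hF : ∀ α, F α =
      ∑ n, u n * ((∑ i, -(α i - 1) * Real.log (z n i)) +
        (∑ i, Real.log (Real.Gamma (α i))) - Real.log (Real.Gamma (∑ i, α i))))
    (hq : ∀ α β, q α β =
      ∑ n, u n * ((∑ i, (-(α i - 1) * Real.log (z n i) - Real.log (α i) +
          phi (β i) + deriv phi (β i) * (α i - β i) +
          curv (β i) / 2 * (α i - β i) ^ 2)) -
        Real.log (Real.Gamma (∑ i, β i)) -
        (∑ i, (α i - β i)) * deriv (fun t : ℝ => Real.log (Real.Gamma t)) (∑ i, β i))) :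
    ∀ β : Fin K → ℝ, (∀ i, 0 < β i) →
      (∀ α : Fin K → ℝ, (∀ i, 0 < α i) → F α ≤ q α β) ∧ q β β = F β := by
  have : Nonempty (Fin K) := ⟨⟨0, hK⟩⟩
  intro β hβ
  have hβsum : 0 < ∑ i, β i := sum_pos (fun i _ => hβ i) univ_nonempty
  refine ⟨fun α hα => ?_, ?_⟩
  · have hcoord : ∑ i, log (Gamma (α i)) ≤ ∑ i, (-log (α i) + phi (β i) +
        deriv phi (β i) * (α i - β i) + curv (β i) / 2 * (α i - β i) ^ 2) :=
      sum_le_sum fun i _ => by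
        rw [log_Gamma_eq_phi_sub_log (hα i)]
        linarith [phi_le_quadratic (hβ i) (hα i).le]
    have htangent := convexOn_log_Gamma.add_deriv_mul_sub_le hβsum
      (sum_pos (fun i _ => hα i) univ_nonempty) (hasDerivAt_log_Gamma hβsum).differentiableAt
    rw [hF, hq]
    refine sum_le_sum fun n _ => mul_le_mul_of_nonneg_left ?_ (hu n)
    simp only [Function.comp_def, sum_sub_distrib, sum_add_distrib, sum_neg_distrib]
      at htangent hcoord ⊢
    linarith
  · rw [hF, hq]
    refine sum_congr rfl fun n _ => ?_
    simp only [sub_self, sum_const_zero, zero_mul, sub_zero, zero_pow two_ne_zero, mul_zero,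
      add_zero, sum_add_distrib, sum_sub_distrib, log_Gamma_eq_phi_sub_log (hβ _)]
    ring

theorem stmt_4 (K N : ℕ) (hK : 1 ≤ K)
    (u : Fin N → ℝ) (hu : ∀ n, 0 ≤ u n) (husum : 0 < ∑ n, u n)
    (z : Fin N → Fin K → ℝ)
    (hz : ∀ n, (∀ i, 0 < z n i) ∧ ∑ i, z n i = 1)
    (F : (Fin K → ℝ) → ℝ) (q : (Fin K → ℝ) → (Fin K → ℝ) → ℝ)
    (hF : ∀ α, F α =
      ∑ n, u n * ((∑ i, -(α i - 1) * Real.log (z n i)) +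
        (∑ i, Real.log (Real.Gamma (α i))) - Real.log (Real.Gamma (∑ i, α i))))
    (hq : ∀ α β, q α β =
      ∑ n, u n * ((∑ i, (-(α i - 1) * Real.log (z n i) - Real.log (α i) +
          phi (β i) + deriv phi (β i) * (α i - β i) +
          curv (β i) / 2 * (α i - β i) ^ 2)) -
        Real.log (Real.Gamma (∑ i, β i)) -
        (∑ i, (α i - β i)) * deriv (fun t : ℝ => Real.log (Real.Gamma t)) (∑ i, β i))) :
    ∀ β : Fin K → ℝ, (∀ i, 0 < β i) →
      (∀ α : Fin K → ℝ, (∀ i, 0 < α i) → F α ≤ q α β) ∧ q β β = F β :=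
  stmt_4_general K N hK u hu z F q hF hq
end
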